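/- arXiv:2009.06436 — 3 statements merged into one kernel-verified Lean document; each statement's English description precedes it below -/
import Mathlib

section
/- RTL satisfaction is invariant under stuttering with respect to state repetition: if an infinite run ξ = x₀x₁x₂... satisfies an RTL formula φ at position k, then the run ξ' obtained by duplicating the state at any position i ≥ k (i.e., ξ' = x₀...x_i x_i x_{i+1}...) also satisfies φ at position k. -/
/-- RTL formulas over a state type `X`: state formulas (predicates on `X`) and
their negations, conjunction, disjunction, until and release. -/
inductive RTL (X : Type*) where
  | state  (ψ : X → Prop) : RTL X
  | nstate (ψ : X → Prop) : RTL X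
  | and    (φ₁ φ₂ : RTL X) : RTL X
  | or     (φ₁ φ₂ : RTL X) : RTL X
  | until_ (φ₁ φ₂ : RTL X) : RTL X
  | release (φ₁ φ₂ : RTL X) : RTL X

/-- RTL satisfaction `ξ ⊨ₖ φ` over an infinite run `ξ : ℕ → X`. -/
def RTL.sat {X : Type*} : RTL X → (ℕ → X) → ℕ → Prop
  | .state ψ, ξ, k => ψ (ξ k)
  | .nstate ψ, ξ, k => ¬ ψ (ξ k)
  | .and φ₁ φ₂, ξ, k => φ₁.sat ξ k ∧ φ₂.sat ξ k
  | .or φ₁ φ₂, ξ, k => φ₁.sat ξ k ∨ φ₂.sat ξ k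
  | .until_ φ₁ φ₂, ξ, k =>
      ∃ k', k ≤ k' ∧ φ₂.sat ξ k' ∧ ∀ k'', k ≤ k'' → k'' < k' → φ₁.sat ξ k''
  | .release φ₁ φ₂, ξ, k =>
      (∃ k', k ≤ k' ∧ φ₁.sat ξ k' ∧ ∀ k'', k ≤ k'' → k'' ≤ k' → φ₂.sat ξ k'') ∨
      (∀ k', k ≤ k' → φ₂.sat ξ k')

theorem rtl_stutter_aux {X : Type*} (ξ : ℕ → X) (i : ℕ) :
    ∀ (φ : RTL X) (m n : ℕ), ((m ≤ i ∧ n = m) ∨ (i ≤ m ∧ n = m + 1)) →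
      φ.sat ξ m → φ.sat (fun j => if j ≤ i then ξ j else ξ (j - 1)) n := by
  intro φ
  induction φ with
  | state ψ =>
    intro m n hrel h
    have he : (fun j => if j ≤ i then ξ j else ξ (j - 1)) n = ξ m := by
      rcases hrel with ⟨hm, rfl⟩ | ⟨hm, rfl⟩
      · simp [hm]
      · have : ¬ (m + 1 ≤ i) := by omega
        simp [this]
    simpa [RTL.sat, he] using h
  | nstate ψ =>
    intro m n hrel h
    have he : (fun j => if j ≤ i then ξ j else ξ (j - 1)) n = ξ m := by
      rcases hrel with ⟨hm, rfl⟩ | ⟨hm, rfl⟩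
      · simp [hm]
      · have : ¬ (m + 1 ≤ i) := by omega
        simp [this]
    simpa [RTL.sat, he] using h
  | and φ₁ φ₂ ih₁ ih₂ =>
    intro m n hrel h
    exact ⟨ih₁ m n hrel h.1, ih₂ m n hrel h.2⟩
  | or φ₁ φ₂ ih₁ ih₂ =>
    intro m n hrel h
    rcases h with h | h
    · exact Or.inl (ih₁ m n hrel h)
    · exact Or.inr (ih₂ m n hrel h)
  | until_ φ₁ φ₂ ih₁ ih₂ =>
    intro m n hrel h
    obtain ⟨k', hk', h₂, hall⟩ := h
    rcases hrel with ⟨hm, rfl⟩ | ⟨hm, rfl⟩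
    · refine ⟨if k' ≤ i then k' else k' + 1, by split <;> omega, ?_, ?_⟩
      · split
        · exact ih₂ k' _ (Or.inl ⟨by omega, rfl⟩) h₂
        · exact ih₂ k' _ (Or.inr ⟨by omega, rfl⟩) h₂
      · intro k'' h1 h2
        by_cases hki : k'' ≤ i
        · exact ih₁ k'' k'' (Or.inl ⟨hki, rfl⟩)
            (hall k'' (by omega) (by split at h2 <;> omega))
        · exact ih₁ (k'' - 1) k'' (Or.inr ⟨by omega, by omega⟩)
            (hall (k'' - 1) (by omega) (by split at h2 <;> omega))
    · refine ⟨k' + 1, by omega, ih₂ k' _ (Or.inr ⟨by omega, rfl⟩) h₂, ?_⟩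
      intro k'' h1 h2
      exact ih₁ (k'' - 1) k'' (Or.inr ⟨by omega, by omega⟩)
        (hall (k'' - 1) (by omega) (by omega))
  | release φ₁ φ₂ ih₁ ih₂ =>
    intro m n hrel h
    rcases h with ⟨k', hk', h₁, hall⟩ | hall
    · left
      rcases hrel with ⟨hm, rfl⟩ | ⟨hm, rfl⟩
      · refine ⟨if k' ≤ i then k' else k' + 1, by split <;> omega, ?_, ?_⟩
        · split
          · exact ih₁ k' _ (Or.inl ⟨by omega, rfl⟩) h₁
          · exact ih₁ k' _ (Or.inr ⟨by omega, rfl⟩) h₁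
        · intro k'' h1 h2
          by_cases hki : k'' ≤ i
          · exact ih₂ k'' k'' (Or.inl ⟨hki, rfl⟩)
              (hall k'' (by omega) (by split at h2 <;> omega))
          · exact ih₂ (k'' - 1) k'' (Or.inr ⟨by omega, by omega⟩)
              (hall (k'' - 1) (by omega) (by split at h2 <;> omega))
      · refine ⟨k' + 1, by omega, ih₁ k' _ (Or.inr ⟨by omega, rfl⟩) h₁, ?_⟩
        intro k'' h1 h2
        by_cases hki : k'' ≤ i
        · exact ih₂ k'' k'' (Or.inl ⟨hki, rfl⟩) (hall k'' (by omega) (by omega))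
        · exact ih₂ (k'' - 1) k'' (Or.inr ⟨by omega, by omega⟩)
            (hall (k'' - 1) (by omega) (by omega))
    · right
      intro n' hn'
      by_cases hni : n' ≤ i
      · refine ih₂ n' n' (Or.inl ⟨hni, rfl⟩) (hall n' ?_)
        rcases hrel with ⟨hm, rfl⟩ | ⟨hm, rfl⟩ <;> omega
      · refine ih₂ (n' - 1) n' (Or.inr ⟨by omega, by omega⟩) (hall (n' - 1) ?_)
        rcases hrel with ⟨hm, rfl⟩ | ⟨hm, rfl⟩ <;> omega

/-- RTL satisfaction is invariant under stuttering: duplicating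
the state at any position `i ≥ k` preserves satisfaction at position `k`. -/
theorem rtl_sat_stutter_invariant
    {X : Type*} (φ : RTL X) (ξ : ℕ → X) (k i : ℕ) (hik : k ≤ i)
    (hsat : φ.sat ξ k) :
    φ.sat (fun j => if j ≤ i then ξ j else ξ (j - 1)) k := by
  exact rtl_stutter_aux ξ i φ k k (Or.inl ⟨hik, rfl⟩) hsat
end

section
/- If an infinite run ξ satisfies φ₁ U φ₂ at position k with witness position k' (where φ₂ first holds), then inserting a backward-forward repetition at position k' — i.e., replacing the run by x₀...x_{k'} x_{k'-1} x_{k'} x_{k'+1}... — preserves satisfaction of φ₁ U φ₂ at position k, provided φ₁ holds at k'-1 and φ₂ holds at k'. -/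
/-- The `backward_at i` operation on a run: `ξ'(j) = ξ(j)` for `j ≤ i`,
`ξ'(i+1) = ξ(i-1)`, and `ξ'(j) = ξ(j-2)` for `j ≥ i+2`
(so in particular `ξ'(i+2) = ξ(i)`). -/
def backwardAt {X : Type*} (i : ℕ) (ξ : ℕ → X) : ℕ → X :=
  fun j => if j ≤ i then ξ j else if j = i + 1 then ξ (i - 1) else ξ (j - 2)

/-- Satisfaction of `φ₁ U φ₂` (state formulas `φ₁ φ₂ : X → Prop`) over a run
at position `k`. -/
def UntilSat {X : Type*} (φ₁ φ₂ : X → Prop) (ξ : ℕ → X) (k : ℕ) : Prop :=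
  ∃ k', k ≤ k' ∧ φ₂ (ξ k') ∧ ∀ k'', k ≤ k'' → k'' < k' → φ₁ (ξ k'')

/-- if `ξ ⊨ₖ φ₁ U φ₂` with witness position `k'` (where `φ₂`
holds), `φ₁` holds at `k' - 1` and `φ₂` holds at `k'`, then inserting a
backward-forward repetition at `k'` preserves satisfaction of `φ₁ U φ₂`
at `k`. -/
theorem until_backward_insertion
    {X : Type*} (φ₁ φ₂ : X → Prop) (ξ : ℕ → X) (k k' : ℕ)
    (hk : k ≤ k') (hk1 : 1 ≤ k')
    (hwit : φ₂ (ξ k'))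
    (hbefore : ∀ k'', k ≤ k'' → k'' < k' → φ₁ (ξ k''))
    (hφ₁ : φ₁ (ξ (k' - 1))) (hφ₂ : φ₂ (ξ k')) :
    UntilSat φ₁ φ₂ (backwardAt k' ξ) k := by
  refine ⟨k', hk, ?_, ?_⟩
  · simpa [backwardAt] using hwit
  · intro k'' h1 h2
    have : k'' ≤ k' := le_of_lt h2
    simpa [backwardAt, this] using hbefore k'' h1 h2
end

section
/- Soundness of the bounded until-encoding on finite lasso runs: let ξ be an ultimately periodic run s₀...s_{L-1}(s_L...s_K)^ω, and define Boolean variables ⟦φ₁ U φ₂⟧_k for 0 ≤ k ≤ K by the recursion ⟦φ₁ U φ₂⟧_k = ⟦φ₂⟧_k ∨ (⟦φ₁⟧_k ∧ ⟦φ₁ U φ₂⟧_{k+1}) with the loop-closing constraint ⟦φ₁ U φ₂⟧_{K+1} = ⟦φ₁ U φ₂⟧_L, together with the eventuality side condition that ⟦φ₁ U φ₂⟧_L implies ∃ j ∈ [L, K] with ⟦φ₂⟧_j. If ⟦φ_i⟧_k correctly reflects ξ ⊨ₖ φ_i for i = 1, 2 and all k, then ⟦φ₁ U φ₂⟧_k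 = true implies ξ ⊨ₖ φ₁ U φ₂ for all 0 ≤ k ≤ K. -/
/-- Satisfaction is invariant under shifting by a period of the run. -/
theorem RTL.sat_shift {X : Type*} (φ : RTL X) (ξ : ℕ → X) (P L : ℕ)
    (hξ : ∀ m, L ≤ m → ξ (m + P) = ξ m) :
    ∀ k, L ≤ k → (φ.sat ξ (k + P) ↔ φ.sat ξ k) := by
  induction φ with
  | state ψ => intro k hk; simp only [RTL.sat, hξ k hk]
  | nstate ψ => intro k hk; simp only [RTL.sat, hξ k hk]
  | and φ₁ φ₂ ih₁ ih₂ => intro k hk; simp only [RTL.sat, ih₁ k hk, ih₂ k hk]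
  | or φ₁ φ₂ ih₁ ih₂ => intro k hk; simp only [RTL.sat, ih₁ k hk, ih₂ k hk]
  | until_ φ₁ φ₂ ih₁ ih₂ =>
    intro k hk
    simp only [RTL.sat]
    constructor
    · rintro ⟨k', h1, h2, h3⟩
      refine ⟨k' - P, by omega, ?_, fun m hm1 hm2 => ?_⟩
      · have h2' : φ₂.sat ξ (k' - P + P) := by rw [show k' - P + P = k' by omega]; exact h2
        exact (ih₂ (k' - P) (by omega)).mp h2'
      · exact (ih₁ m (le_trans hk hm1)).mp (h3 (m + P) (by omega) (by omega))
    · rintro ⟨k', h1, h2, h3⟩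
      refine ⟨k' + P, by omega, (ih₂ k' (le_trans hk h1)).mpr h2, fun m hm1 hm2 => ?_⟩
      have : m - P + P = m := by omega
      exact this ▸ (ih₁ (m - P) (by omega)).mpr (h3 (m - P) (by omega) (by omega))
  | release φ₁ φ₂ ih₁ ih₂ =>
    intro k hk
    simp only [RTL.sat]
    constructor
    · rintro (⟨k', h1, h2, h3⟩ | h)
      · refine Or.inl ⟨k' - P, by omega, ?_, fun m hm1 hm2 => ?_⟩
        · have h2' : φ₁.sat ξ (k' - P + P) := by rw [show k' - P + P = k' by omega]; exact h2
          exact (ih₁ (k' - P) (by omega)).mp h2'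
        · exact (ih₂ m (le_trans hk hm1)).mp (h3 (m + P) (by omega) (by omega))
      · exact Or.inr fun k' h1 => (ih₂ k' (le_trans hk h1)).mp (h (k' + P) (by omega))
    · rintro (⟨k', h1, h2, h3⟩ | h)
      · refine Or.inl ⟨k' + P, by omega, (ih₁ k' (le_trans hk h1)).mpr h2,
          fun m hm1 hm2 => ?_⟩
        have : m - P + P = m := by omega
        exact this ▸ (ih₂ (m - P) (by omega)).mpr (h3 (m - P) (by omega) (by omega))
      · refine Or.inr fun k' h1 => ?_
        have : k' - P + P = k' := by omega
        exact this ▸ (ih₂ (k' - P) (by omega)).mpr (h (k' - P) (by omega))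

/-- soundness of the bounded until-encoding on lasso runs.
Given an ultimately periodic run `s₀…s_{L-1}(s_L…s_K)^ω`, Boolean variables
`b k = ⟦φ₁ U φ₂⟧_k` satisfying the unfolding recursion, the loop-closing
constraint `b (K+1) = b L`, and the eventuality side condition, and Boolean
variables `p`, `q` correctly reflecting satisfaction of `φ₁`, `φ₂`, then
`b k = true` implies `ξ ⊨ₖ φ₁ U φ₂` for all `0 ≤ k ≤ K`. -/
theorem bounded_until_encoding_sound
    {X : Type*} (φ₁ φ₂ : RTL X) (s : ℕ → X) (L K : ℕ) (hLK : L ≤ K)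
    (ξ : ℕ → X)
    (hpre : ∀ n ≤ K, ξ n = s n)
    (hper : ∀ n > K, ξ n = ξ (n - (K - L + 1)))
    (b p q : ℕ → Bool)
    (hp : ∀ k, p k = true ↔ φ₁.sat ξ k)
    (hq : ∀ k, q k = true ↔ φ₂.sat ξ k)
    (hrec : ∀ k ≤ K, b k = (q k || (p k && b (k + 1))))
    (hloop : b (K + 1) = b L)
    (hev : b L = true → ∃ j, L ≤ j ∧ j ≤ K ∧ q j = true) :
    ∀ k ≤ K, b k = true → (RTL.until_ φ₁ φ₂).sat ξ k := by
  have lemA : ∀ d k, k ≤ K → K - k ≤ d → b k = true →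
      (∃ j₀, k ≤ j₀ ∧ j₀ ≤ K ∧ q j₀ = true) →
      ∃ j, k ≤ j ∧ j ≤ K ∧ q j = true ∧ ∀ i, k ≤ i → i < j → p i = true := by
    intro d
    induction d with
    | zero =>
      intro k hk hd hb ⟨j₀, hj1, hj2, hjq⟩
      have : j₀ = k := by omega
      exact ⟨k, le_refl _, hk, this ▸ hjq, fun i h1 h2 => by omega⟩
    | succ n ih =>
      intro k hk hd hb ⟨j₀, hj1, hj2, hjq⟩
      cases hqk : q k with
      | true => exact ⟨k, le_refl _, hk, hqk, fun i h1 h2 => by omega⟩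
      | false =>
        have hrk := hrec k hk
        rw [hb, hqk] at hrk
        simp only [Bool.false_or] at hrk
        obtain ⟨hpk, hbk1⟩ := Bool.and_eq_true _ _ |>.mp hrk.symm
        have hj₀k : k + 1 ≤ j₀ := by
          rcases Nat.lt_or_ge k j₀ with h | h
          · omega
          · have : j₀ = k := by omega
            rw [this, hqk] at hjq; exact absurd hjq (by simp)
        obtain ⟨j, h1, h2, h3, h4⟩ := ih (k+1) (by omega) (by omega) hbk1 ⟨j₀, hj₀k, hj2, hjq⟩
        refine ⟨j, by omega, h2, h3, fun i hi1 hi2 => ?_⟩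
        rcases Nat.eq_or_lt_of_le hi1 with h | h
        · exact h ▸ hpk
        · exact h4 i (by omega) hi2
  have lemB : ∀ d k, k ≤ K → K - k ≤ d → b k = true →
      (∃ j, k ≤ j ∧ j ≤ K ∧ q j = true ∧ ∀ i, k ≤ i → i < j → p i = true) ∨
      ((∀ i, k ≤ i → i ≤ K → p i = true) ∧ b L = true) := by
    intro d
    induction d with
    | zero =>
      intro k hk hd hb
      have hkK : k = K := by omega
      subst hkK
      cases hqk : q k with
      | true => exact Or.inl ⟨k, le_refl _, le_refl _, hqk, fun i h1 h2 => by omega⟩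
      | false =>
        have hrk := hrec k (le_refl _)
        rw [hb, hqk] at hrk
        simp only [Bool.false_or] at hrk
        obtain ⟨hpk, hbk1⟩ := Bool.and_eq_true _ _ |>.mp hrk.symm
        refine Or.inr ⟨fun i h1 h2 => ?_, hloop ▸ hbk1⟩
        have : i = k := by omega
        exact this ▸ hpk
    | succ n ih =>
      intro k hk hd hb
      cases hqk : q k with
      | true => exact Or.inl ⟨k, le_refl _, hk, hqk, fun i h1 h2 => by omega⟩
      | false =>
        have hrk := hrec k hk
        rw [hb, hqk] at hrk
        simp only [Bool.false_or] at hrk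
        obtain ⟨hpk, hbk1⟩ := Bool.and_eq_true _ _ |>.mp hrk.symm
        rcases Nat.eq_or_lt_of_le hk with hkK | hkK
        · refine Or.inr ⟨fun i h1 h2 => ?_, by rw [← hloop, ← hkK]; exact hbk1⟩
          have : i = k := by omega
          exact this ▸ hpk
        · rcases ih (k+1) (by omega) (by omega) hbk1 with ⟨j, h1, h2, h3, h4⟩ | ⟨h1, h2⟩
          · refine Or.inl ⟨j, by omega, h2, h3, fun i hi1 hi2 => ?_⟩
            rcases Nat.eq_or_lt_of_le hi1 with h | h
            · exact h ▸ hpk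
            · exact h4 i (by omega) hi2
          · refine Or.inr ⟨fun i hi1 hi2 => ?_, h2⟩
            rcases Nat.eq_or_lt_of_le hi1 with h | h
            · exact h ▸ hpk
            · exact h1 i (by omega) hi2
  intro k hk hb
  show ∃ k', k ≤ k' ∧ φ₂.sat ξ k' ∧ ∀ k'', k ≤ k'' → k'' < k' → φ₁.sat ξ k''
  rcases lemB K k hk (by omega) hb with ⟨j, hkj, hjK, hqj, hpij⟩ | ⟨hpall, hbL⟩
  · exact ⟨j, hkj, (hq j).mp hqj, fun i h1 h2 => (hp i).mp (hpij i h1 h2)⟩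
  · obtain ⟨j, hLj, hjK, hqj, hpLj⟩ := lemA K L hLK (by omega) hbL (hev hbL)
    by_cases hkj : k ≤ j
    · exact ⟨j, hkj, (hq j).mp hqj, fun i h1 h2 =>
        (hp i).mp (hpall i h1 (by omega))⟩
    · push_neg at hkj
      have hshift : ∀ m, L ≤ m → ξ (m + (K - L + 1)) = ξ m := by
        intro m hm
        have := hper (m + (K - L + 1)) (by omega)
        have heq : m + (K - L + 1) - (K - L + 1) = m := by omega
        rw [this, heq]
      refine ⟨j + (K - L + 1), by omega, ?_, fun i h1 h2 => ?_⟩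
      · exact (RTL.sat_shift φ₂ ξ (K - L + 1) L hshift j hLj).mpr ((hq j).mp hqj)
      · rcases le_or_gt i K with h | h
        · exact (hp i).mp (hpall i h1 h)
        · have heq : i - (K - L + 1) + (K - L + 1) = i := by omega
          have := (RTL.sat_shift φ₁ ξ (K - L + 1) L hshift (i - (K - L + 1))
            (by omega)).mpr ((hp _).mp (hpLj (i - (K - L + 1)) (by omega) (by omega)))
          rwa [heq] at this
end
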